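/- (Theorem 1.) Fix finite nonempty alphabets 𝒳 and 𝒴, a rate R > 0, and ε > ε₁ > 0. For each block length n ≥ 1, let W_n be a channel, let Q_n be a probability mass function on 𝒳^n, set M_n = ⌈2^{nR}⌉ and M'_n = ⌈M_n(1+ε)⌉, and let μ_n be a pairwise-independent ensemble with M'_n codewords and marginal Q_n. Suppose for each n there is ρ̂_n ≥ 1 attaining max_{ρ ≥ 1} [ E_x^{(n)}(ρ, Q_n) − ρR ], and set E_ex^n(R) = E_x^{(n)}(ρ̂_n, Q_n) − ρ̂_n R. Suppose there is a sequence (γ_n) of positive reals with γ_n → ∞, (log₂ γ_n)/n → 0, and δ_n := (ρ̂_n/n)·log₂ γ_n → 0. Define Φ_n(c) = #{ m ∈ {1,…,M'_n} : −(1/n)·log₂ P_{e,m}(c) > E_ex^n(R) − δ_n } (with the convention −log₂ 0 = +∞). Then lim_{n→∞} μ_n[ Φ_n(C) ≥ M_n(1+ε₁) ] = 1. -/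

import Mathlib

/-!
Fix `n`, put `s = 1/ρ̂_n ≤ 1` and `t = 2^(-n(E_ex^n(R) - δ_n))`. By the union–Bhattacharyya
bound and subadditivity of `x ↦ x^s`, `P_{e,m}^s ≤ ∑_{k≠m} Z_n(x_m, x_k)^s`, whose mean under
pairwise independence is at most `(M'-1)·2^(-n E_x(ρ̂)/ρ̂)`. Markov's inequality for `P_{e,m}^s`
then gives `Pr[P_{e,m} ≥ t] ≤ (M'-1)/(2^(nR) γ_n)`. A second Markov inequality, for the number
of messages with `P_{e,m} ≥ t`, shows that more than `M' - M(1+ε₁) ≥ M(ε-ε₁)` of them occur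
with probability at most `2(2+ε)²/((ε-ε₁) γ_n) → 0`.
-/

open scoped Classical

/-- `W` is a channel: nonnegative, and each row sums to one. -/
def IsChannel {𝒳 𝒴 : Type*} [Fintype 𝒴] (W : 𝒳 → 𝒴 → ℝ) : Prop :=
  (∀ x y, 0 ≤ W x y) ∧ ∀ x, ∑ y, W x y = 1

/-- Maximum-likelihood error probability of message `m` under code `c`
(ties counted as errors). -/
noncomputable def Pem {𝒳 𝒴 : Type*} [Fintype 𝒴] {M : ℕ}
    (W : 𝒳 → 𝒴 → ℝ) (c : Fin M → 𝒳) (m : Fin M) : ℝ :=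
  ∑ y, W (c m) y * (if ∃ k, k ≠ m ∧ W (c m) y ≤ W (c k) y then (1:ℝ) else 0)

/-- Bhattacharyya coefficient between inputs `x` and `x'`. -/
noncomputable def Bhat {𝒳 𝒴 : Type*} [Fintype 𝒴] (W : 𝒳 → 𝒴 → ℝ) (x x' : 𝒳) : ℝ :=
  ∑ y, Real.sqrt (W x y * W x' y)

/-- `p` is a probability mass function on a finite type. -/
def IsPMF {α : Type*} [Fintype α] (p : α → ℝ) : Prop :=
  (∀ a, 0 ≤ p a) ∧ ∑ a, p a = 1

/-- Probability of the event `S` under the pmf `μ`. -/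
noncomputable def pmfProb {α : Type*} [Fintype α] (μ : α → ℝ) (S : α → Prop) : ℝ :=
  ∑ a, if S a then μ a else 0

/-- Expectation of `f` under the pmf `μ`. -/
noncomputable def pmfExp {α : Type*} [Fintype α] (μ : α → ℝ) (f : α → ℝ) : ℝ :=
  ∑ a, μ a * f a

/-- `μ` is a pairwise-independent ensemble of `M` codewords with marginal `Q`:
each codeword has law `Q` and each pair of distinct codewords has law `Q × Q`. -/
def PairwiseIndepEnsemble {𝒳 : Type*} [Fintype 𝒳] {M : ℕ}
    (μ : (Fin M → 𝒳) → ℝ) (Q : 𝒳 → ℝ) : Prop :=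
  IsPMF μ ∧ IsPMF Q ∧
  (∀ (m : Fin M) (x : 𝒳), pmfProb μ (fun c => c m = x) = Q x) ∧
  (∀ (m k : Fin M), m ≠ k → ∀ (x x' : 𝒳),
    pmfProb μ (fun c => c m = x ∧ c k = x') = Q x * Q x')

/-- The expurgated exponent function `E_x^{(n)}(ρ, Q)`. -/
noncomputable def ExFun {𝒳 𝒴 : Type*} [Fintype 𝒳] [Fintype 𝒴]
    (n : ℕ) (W : (Fin n → 𝒳) → (Fin n → 𝒴) → ℝ)
    (Q : (Fin n → 𝒳) → ℝ) (ρ : ℝ) : ℝ :=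
  -(1 / (n : ℝ)) *
    Real.logb 2 ((∑ x, ∑ x', Q x * Q x' * Bhat W x x' ^ (1/ρ)) ^ ρ)

lemma Real.rpow_sum_le_sum_rpow {ι : Type*} (s : Finset ι) {f : ι → ℝ} (hf : ∀ i ∈ s, 0 ≤ f i)
    {p : ℝ} (hp : 0 < p) (hp1 : p ≤ 1) :
    (∑ i ∈ s, f i) ^ p ≤ ∑ i ∈ s, f i ^ p :=
  Finset.le_sum_of_subadditive_on_pred (fun x : ℝ => x ^ p) (0 ≤ ·)
    (by simp [Real.zero_rpow hp.ne']) (fun _ _ hx hy => Real.rpow_add_le_add_rpow hx hy hp.le hp1)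
    (fun _ _ => add_nonneg) f hf

section FinitePMF

variable {α : Type*} [Fintype α] {μ : α → ℝ}

lemma pmfProb_eq_pmfExp_ite (S : α → Prop) :
    pmfProb μ S = pmfExp μ (fun a => if S a then 1 else 0) := by
  simp only [pmfProb, pmfExp, mul_ite, mul_one, mul_zero]

lemma pmfProb_mono (hμ : ∀ a, 0 ≤ μ a) {S T : α → Prop} (h : ∀ a, S a → T a) :
    pmfProb μ S ≤ pmfProb μ T :=
  Finset.sum_le_sum fun a _ => by split_ifs <;> simp_all

lemma pmfProb_le_one (hμ : IsPMF μ) (S : α → Prop) : pmfProb μ S ≤ 1 :=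
  hμ.2 ▸ Finset.sum_le_sum fun a _ => by split <;> simp [hμ.1 a]

lemma pmfProb_not (hμ : IsPMF μ) (S : α → Prop) :
    pmfProb μ (fun a => ¬ S a) = 1 - pmfProb μ S := by
  rw [← hμ.2, pmfProb, pmfProb, ← Finset.sum_sub_distrib]
  exact Finset.sum_congr rfl fun a _ => by by_cases h : S a <;> simp [h]

lemma pmfExp_mono (hμ : ∀ a, 0 ≤ μ a) {f g : α → ℝ} (h : ∀ a, f a ≤ g a) :
    pmfExp μ f ≤ pmfExp μ g :=
  Finset.sum_le_sum fun a _ => mul_le_mul_of_nonneg_left (h a) (hμ a)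

lemma pmfExp_sum {ι : Type*} (s : Finset ι) (F : ι → α → ℝ) :
    pmfExp μ (fun a => ∑ i ∈ s, F i a) = ∑ i ∈ s, pmfExp μ (F i) := by
  simp only [pmfExp, Finset.mul_sum]
  exact Finset.sum_comm

lemma pmfProb_le_pmfExp_div (hμ : ∀ a, 0 ≤ μ a) {f : α → ℝ} (hf : ∀ a, 0 ≤ f a) {t : ℝ}
    (ht : 0 < t) : pmfProb μ (fun a => t ≤ f a) ≤ pmfExp μ f / t := by
  rw [pmfProb_eq_pmfExp_ite, le_div_iff₀ ht, pmfExp, pmfExp, Finset.sum_mul]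
  refine Finset.sum_le_sum fun a _ => ?_
  split_ifs with h
  · nlinarith [hμ a]
  · simpa using mul_nonneg (hμ a) (hf a)

lemma pmfProb_le_card_filter_le {ι : Type*} (hμ : ∀ a, 0 ≤ μ a) (s : Finset ι)
    (A : ι → α → Prop) {u : ℝ} (hu : 0 < u) :
    pmfProb μ (fun a => u ≤ ((s.filter (A · a)).card : ℝ)) ≤ (∑ i ∈ s, pmfProb μ (A i)) / u := by
  refine (pmfProb_le_pmfExp_div hμ (fun _ => Nat.cast_nonneg _) hu).trans_eq ?_
  simp only [Finset.natCast_card_filter, pmfExp_sum, pmfProb_eq_pmfExp_ite]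

end FinitePMF

lemma Bhat_nonneg {𝒳 𝒴 : Type*} [Fintype 𝒴] (W : 𝒳 → 𝒴 → ℝ) (x x' : 𝒳) :
    0 ≤ Bhat W x x' :=
  Finset.sum_nonneg fun _ _ => Real.sqrt_nonneg _

lemma Pem_nonneg {𝒳 𝒴 : Type*} [Fintype 𝒴] {M : ℕ} {W : 𝒳 → 𝒴 → ℝ} (hW : ∀ x y, 0 ≤ W x y)
    (c : Fin M → 𝒳) (m : Fin M) : 0 ≤ Pem W c m :=
  Finset.sum_nonneg fun _ _ => mul_nonneg (hW _ _) (by positivity)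

/-- The union–Bhattacharyya bound: on every output where a competitor `k` beats `m`,
`W(y|x_m) ≤ √(W(y|x_m) W(y|x_k))`. -/
lemma Pem_le_sum_Bhat {𝒳 𝒴 : Type*} [Fintype 𝒴] {M : ℕ} {W : 𝒳 → 𝒴 → ℝ}
    (hW : ∀ x y, 0 ≤ W x y) (c : Fin M → 𝒳) (m : Fin M) :
    Pem W c m ≤ ∑ k ∈ Finset.univ.erase m, Bhat W (c m) (c k) := by
  simp only [Pem, Bhat]
  rw [Finset.sum_comm (s := Finset.univ.erase m)]
  refine Finset.sum_le_sum fun y _ => ?_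
  split_ifs with h
  · obtain ⟨k, hk, hle⟩ := h
    calc W (c m) y * 1 = Real.sqrt (W (c m) y * W (c m) y) := by
          rw [mul_one, Real.sqrt_mul_self (hW _ _)]
      _ ≤ Real.sqrt (W (c m) y * W (c k) y) :=
          Real.sqrt_le_sqrt (mul_le_mul_of_nonneg_left hle (hW _ _))
      _ ≤ ∑ j ∈ Finset.univ.erase m, Real.sqrt (W (c m) y * W (c j) y) :=
          Finset.single_le_sum (f := fun j => Real.sqrt (W (c m) y * W (c j) y))
            (fun _ _ => Real.sqrt_nonneg _) (Finset.mem_erase.mpr ⟨hk, Finset.mem_univ k⟩)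
  · rw [mul_zero]
    exact Finset.sum_nonneg fun _ _ => Real.sqrt_nonneg _

section Ensemble

variable {𝒳 : Type*} [Fintype 𝒳] {N : ℕ} {μ : (Fin N → 𝒳) → ℝ} {Q : 𝒳 → ℝ}

lemma PairwiseIndepEnsemble.pmfExp_apply_apply (hμ : PairwiseIndepEnsemble μ Q) {m k : Fin N}
    (hmk : m ≠ k) (g : 𝒳 → 𝒳 → ℝ) :
    pmfExp μ (fun c => g (c m) (c k)) = ∑ x, ∑ x', Q x * Q x' * g x x' := by
  simp only [← hμ.2.2.2 m k hmk, pmfProb, Finset.sum_mul, ite_mul, zero_mul]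
  calc pmfExp μ (fun c => g (c m) (c k))
      = ∑ c, ∑ x, ∑ x', if c m = x ∧ c k = x' then μ c * g x x' else 0 :=
        Finset.sum_congr rfl fun c _ => by simp [ite_and]
    _ = _ := by
        rw [Finset.sum_comm]
        exact Finset.sum_congr rfl fun x _ => Finset.sum_comm

variable {𝒴 : Type*} [Fintype 𝒴] {W : 𝒳 → 𝒴 → ℝ}

lemma PairwiseIndepEnsemble.pmfExp_Pem_rpow_le (hμ : PairwiseIndepEnsemble μ Q)
    (hW : ∀ x y, 0 ≤ W x y) (m : Fin N) {s : ℝ} (hs0 : 0 < s) (hs1 : s ≤ 1) :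
    pmfExp μ (fun c => Pem W c m ^ s)
      ≤ ((N : ℝ) - 1) * ∑ x, ∑ x', Q x * Q x' * Bhat W x x' ^ s := by
  calc pmfExp μ (fun c => Pem W c m ^ s)
      ≤ pmfExp μ (fun c => ∑ k ∈ Finset.univ.erase m, Bhat W (c m) (c k) ^ s) :=
        pmfExp_mono hμ.1.1 fun c =>
          (Real.rpow_le_rpow (Pem_nonneg hW c m) (Pem_le_sum_Bhat hW c m) hs0.le).trans
            (Real.rpow_sum_le_sum_rpow _ (fun _ _ => Bhat_nonneg _ _ _) hs0 hs1)
    _ = ∑ _k ∈ Finset.univ.erase m, ∑ x, ∑ x', Q x * Q x' * Bhat W x x' ^ s := by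
        rw [pmfExp_sum]
        exact Finset.sum_congr rfl fun k hk =>
          hμ.pmfExp_apply_apply (Finset.ne_of_mem_erase hk).symm (fun x x' => Bhat W x x' ^ s)
    _ = ((N : ℝ) - 1) * ∑ x, ∑ x', Q x * Q x' * Bhat W x x' ^ s := by
        rw [Finset.sum_const, Finset.card_erase_of_mem (Finset.mem_univ m), Finset.card_univ,
          Fintype.card_fin, nsmul_eq_mul, Nat.cast_pred (Fin.pos m)]

lemma PairwiseIndepEnsemble.pmfProb_le_Pem_le (hμ : PairwiseIndepEnsemble μ Q)
    (hW : ∀ x y, 0 ≤ W x y) (m : Fin N) {s t : ℝ} (hs0 : 0 < s) (hs1 : s ≤ 1) (ht : 0 < t) :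
    pmfProb μ (fun c => t ≤ Pem W c m)
      ≤ ((N : ℝ) - 1) * (∑ x, ∑ x', Q x * Q x' * Bhat W x x' ^ s) / t ^ s :=
  calc pmfProb μ (fun c => t ≤ Pem W c m)
      ≤ pmfProb μ (fun c => t ^ s ≤ Pem W c m ^ s) :=
        pmfProb_mono hμ.1.1 fun _ h => Real.rpow_le_rpow ht.le h hs0.le
    _ ≤ pmfExp μ (fun c => Pem W c m ^ s) / t ^ s :=
        pmfProb_le_pmfExp_div hμ.1.1 (fun c => Real.rpow_nonneg (Pem_nonneg hW c m) s)
          (Real.rpow_pos_of_pos ht s)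
    _ ≤ _ := by
        gcongr
        exact hμ.pmfExp_Pem_rpow_le hW m hs0 hs1

end Ensemble

section Exponent

variable {𝒳 𝒴 : Type*} [Fintype 𝒳] [Fintype 𝒴] {n : ℕ} {W : (Fin n → 𝒳) → (Fin n → 𝒴) → ℝ}
  {Q : (Fin n → 𝒳) → ℝ}

lemma sum_Bhat_rpow_le_two_rpow_ExFun (hn : n ≠ 0) (hQ : ∀ x, 0 ≤ Q x) {ρ : ℝ} (hρ : 0 < ρ) :
    ∑ x, ∑ x', Q x * Q x' * Bhat W x x' ^ (1 / ρ) ≤ 2 ^ (-(n * ExFun n W Q ρ) / ρ) := by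
  set S := ∑ x, ∑ x', Q x * Q x' * Bhat W x x' ^ (1 / ρ)
  have hS : 0 ≤ S := Finset.sum_nonneg fun x _ => Finset.sum_nonneg fun x' _ =>
    mul_nonneg (mul_nonneg (hQ x) (hQ x')) (Real.rpow_nonneg (Bhat_nonneg _ _ _) _)
  have hlog : -(n * ExFun n W Q ρ) = Real.logb 2 (S ^ ρ) := by
    simp only [ExFun]
    field_simp
    rfl
  rcases hS.eq_or_lt with hS0 | hSpos
  · rw [← hS0]
    positivity
  · rw [hlog, div_eq_mul_inv, Real.rpow_mul zero_le_two,
      Real.rpow_logb two_pos (by norm_num) (Real.rpow_pos_of_pos hSpos ρ),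
      Real.rpow_rpow_inv hS hρ.ne']

/-- The `1/ρ`-th power of the threshold `2 ^ (-n (E_x(ρ) - ρR - (ρ/n) log₂ γ))` splits as
`2^(-n E_x(ρ)/ρ) · 2^(nR) · γ`, and the first factor dominates the Bhattacharyya sum. -/
lemma PairwiseIndepEnsemble.pmfProb_two_rpow_le_Pem_le {N : ℕ} {μ : (Fin N → Fin n → 𝒳) → ℝ}
    (hμ : PairwiseIndepEnsemble μ Q) (hW : ∀ x y, 0 ≤ W x y) (hn : n ≠ 0) (m : Fin N)
    {ρ R γ : ℝ} (hρ : 1 ≤ ρ) (hγ : 0 < γ) :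
    pmfProb μ (fun c => (2 : ℝ) ^ (-(n : ℝ) * (ExFun n W Q ρ - ρ * R - ρ / n * Real.logb 2 γ))
        ≤ Pem W c m)
      ≤ ((N : ℝ) - 1) / (2 ^ ((n : ℝ) * R) * γ) := by
  have hρ0 : 0 < ρ := zero_lt_one.trans_le hρ
  set V : ℝ := 2 ^ (-(n * ExFun n W Q ρ) / ρ)
  have hV : 0 < V := Real.rpow_pos_of_pos two_pos _
  have hT : (0 : ℝ) < 2 ^ ((n : ℝ) * R) := Real.rpow_pos_of_pos two_pos _
  have hN : (0 : ℝ) ≤ N - 1 := sub_nonneg.mpr (Nat.one_le_cast.mpr (Fin.pos m))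
  have hpow : ((2 : ℝ) ^ (-(n : ℝ) * (ExFun n W Q ρ - ρ * R - ρ / n * Real.logb 2 γ))) ^ (1 / ρ)
      = V * 2 ^ ((n : ℝ) * R) * γ := by
    have hn' : (n : ℝ) ≠ 0 := Nat.cast_ne_zero.mpr hn
    rw [← Real.rpow_mul zero_le_two, ← Real.rpow_logb two_pos (by norm_num) hγ,
      ← Real.rpow_add two_pos, ← Real.rpow_add two_pos, Real.rpow_logb two_pos (by norm_num) hγ]
    congr 1
    field_simp
    ring
  calc _ ≤ ((N : ℝ) - 1) * (∑ x, ∑ x', Q x * Q x' * Bhat W x x' ^ (1 / ρ))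
          / (2 ^ (-(n : ℝ) * (ExFun n W Q ρ - ρ * R - ρ / n * Real.logb 2 γ))) ^ (1 / ρ) :=
        hμ.pmfProb_le_Pem_le hW m (by positivity) (div_le_one_of_le₀ hρ hρ0.le)
          (Real.rpow_pos_of_pos two_pos _)
    _ ≤ ((N : ℝ) - 1) * V / (V * 2 ^ ((n : ℝ) * R) * γ) := by
        rw [hpow]
        gcongr
        exact sum_Bhat_rpow_le_two_rpow_ExFun hn hμ.2.1.1 hρ0
    _ = ((N : ℝ) - 1) / (2 ^ ((n : ℝ) * R) * γ) := by
        field_simp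

end Exponent

lemma eq_zero_or_lt_neg_inv_mul_logb_iff {n a P : ℝ} (hn : 0 < n) (hP : 0 ≤ P) :
    (P = 0 ∨ a < -(1 / n) * Real.logb 2 P) ↔ P < 2 ^ (-n * a) := by
  rcases hP.eq_or_lt with rfl | hP
  · simp only [true_or, true_iff]
    positivity
  · have : a < -(1 / n) * Real.logb 2 P ↔ Real.logb 2 P < -n * a := by
      rw [neg_mul, lt_neg, one_div_mul_eq_div, div_lt_iff₀ hn, neg_mul_comm, mul_comm]
    rw [this, Real.logb_lt_iff_lt_rpow one_lt_two hP]
    simp [hP.ne']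

lemma mul_sub_one_div_le_of_le_ceil {T M M' ε ε₁ : ℝ} (hT : 1 ≤ T) (hTM : T ≤ M)
    (hMT : M < T + 1) (hM' : M * (1 + ε) ≤ M') (hM'M : M' < M * (1 + ε) + 1) (hε₁ : 0 ≤ ε₁)
    (hεε : ε₁ < ε) :
    M' * (M' - 1) / (T * (M' - M * (1 + ε₁))) ≤ 2 * (2 + ε) ^ 2 / (ε - ε₁) := by
  have hε : 0 < ε - ε₁ := sub_pos.mpr hεε
  have hM : 1 ≤ M := hT.trans hTM
  have hu : M * (ε - ε₁) ≤ M' - M * (1 + ε₁) := by linarith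
  have hM'le : M' ≤ M * (2 + ε) := by nlinarith
  have hM'0 : 1 ≤ M' := by nlinarith
  have hpos : 0 < T * (M' - M * (1 + ε₁)) :=
    mul_pos (by linarith) ((mul_pos (by linarith) hε).trans_le hu)
  rw [div_le_div_iff₀ hpos hε]
  calc M' * (M' - 1) * (ε - ε₁) ≤ (M * (2 + ε)) ^ 2 * (ε - ε₁) := by gcongr; nlinarith
    _ = (2 + ε) ^ 2 * M * (M * (ε - ε₁)) := by ring
    _ ≤ (2 + ε) ^ 2 * (2 * T) * (M' - M * (1 + ε₁)) := by gcongr; nlinarith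
    _ = 2 * (2 + ε) ^ 2 * (T * (M' - M * (1 + ε₁))) := by ring

theorem PairwiseIndepEnsemble.pmfProb_card_good_lt_le {𝒳 𝒴 : Type*} [Fintype 𝒳] [Fintype 𝒴]
    {n M N : ℕ} {W : (Fin n → 𝒳) → (Fin n → 𝒴) → ℝ} {Q : (Fin n → 𝒳) → ℝ}
    {μ : (Fin N → Fin n → 𝒳) → ℝ} (hμ : PairwiseIndepEnsemble μ Q) (hW : ∀ x y, 0 ≤ W x y)
    (hn : n ≠ 0) {ρ R γ ε ε₁ a : ℝ} (hρ : 1 ≤ ρ) (hR : 0 ≤ R) (hγ : 0 < γ) (hε₁ : 0 ≤ ε₁)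
    (hεε : ε₁ < ε) (hM : M = ⌈(2 : ℝ) ^ ((n : ℝ) * R)⌉₊) (hN : N = ⌈(M : ℝ) * (1 + ε)⌉₊)
    (ha : a = ExFun n W Q ρ - ρ * R - ρ / n * Real.logb 2 γ) :
    pmfProb μ (fun c => ¬ ((M : ℝ) * (1 + ε₁) ≤ ((Finset.univ.filter fun m =>
        Pem W c m = 0 ∨ a < -(1 / (n : ℝ)) * Real.logb 2 (Pem W c m)).card : ℝ)))
      ≤ 2 * (2 + ε) ^ 2 / (ε - ε₁) / γ := by
  set T : ℝ := 2 ^ ((n : ℝ) * R)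
  set t : ℝ := 2 ^ (-(n : ℝ) * a)
  have hn' : (0 : ℝ) < n := Nat.cast_pos.mpr (Nat.pos_of_ne_zero hn)
  have hT : 1 ≤ T := Real.one_le_rpow one_le_two (by positivity)
  have hTM : T ≤ M := hM ▸ Nat.le_ceil T
  have hMT : (M : ℝ) < T + 1 := hM ▸ Nat.ceil_lt_add_one (by positivity)
  have hNM : (M : ℝ) * (1 + ε) ≤ N := hN ▸ Nat.le_ceil _
  have hMN : (N : ℝ) < M * (1 + ε) + 1 :=
    hN ▸ Nat.ceil_lt_add_one (mul_nonneg (by positivity) (by linarith))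
  set u : ℝ := N - M * (1 + ε₁)
  have hu : 0 < u := by nlinarith
  have hcount : ∀ c : Fin N → Fin n → 𝒳,
      ((Finset.univ.filter fun m =>
          Pem W c m = 0 ∨ a < -(1 / (n : ℝ)) * Real.logb 2 (Pem W c m)).card : ℝ)
        + (Finset.univ.filter fun m => t ≤ Pem W c m).card = N := by
    intro c
    rw [Finset.filter_congr fun m _ =>
      (eq_zero_or_lt_neg_inv_mul_logb_iff hn' (Pem_nonneg hW c m)).trans not_le.symm, add_comm,
      ← Nat.cast_add]
    exact congrArg _ ((Finset.card_filter_add_card_filter_not _).trans (Finset.card_fin N))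
  calc _ ≤ pmfProb μ (fun c => u ≤ ((Finset.univ.filter fun m => t ≤ Pem W c m).card : ℝ)) :=
        pmfProb_mono hμ.1.1 fun c h => by linarith [hcount c]
    _ ≤ (∑ m, pmfProb μ (fun c => t ≤ Pem W c m)) / u := pmfProb_le_card_filter_le hμ.1.1 _ _ hu
    _ ≤ (∑ _m : Fin N, ((N : ℝ) - 1) / (T * γ)) / u := by
        gcongr with m
        have := hμ.pmfProb_two_rpow_le_Pem_le hW hn m (R := R) hρ hγ
        rwa [← ha] at this
    _ = N * (N - 1) / (T * u) / γ := by
        rw [Finset.sum_const, Finset.card_univ, Fintype.card_fin, nsmul_eq_mul]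
        field_simp
    _ ≤ 2 * (2 + ε) ^ 2 / (ε - ε₁) / γ :=
        div_le_div_of_nonneg_right
          (mul_sub_one_div_le_of_le_ceil hT hTM hMT hNM hMN hε₁ hεε) hγ.le

theorem theorem1_general
    {𝒳 𝒴 : Type*} [Fintype 𝒳] [Fintype 𝒴]
    (R : ℝ) (hR : 0 < R) (ε ε₁ : ℝ) (hε₁ : 0 < ε₁) (hεε : ε₁ < ε)
    (W : ∀ n : ℕ, (Fin n → 𝒳) → (Fin n → 𝒴) → ℝ)
    (hW : ∀ n, 1 ≤ n → IsChannel (W n))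
    (Q : ∀ n : ℕ, (Fin n → 𝒳) → ℝ)
    (M M' : ℕ → ℕ)
    (hM : ∀ n, M n = ⌈(2:ℝ) ^ ((n : ℝ) * R)⌉₊)
    (hM' : ∀ n, M' n = ⌈(M n : ℝ) * (1 + ε)⌉₊)
    (μ : ∀ n : ℕ, (Fin (M' n) → (Fin n → 𝒳)) → ℝ)
    (hμ : ∀ n, 1 ≤ n → PairwiseIndepEnsemble (μ n) (Q n))
    (ρhat : ℕ → ℝ) (hρhat1 : ∀ n, 1 ≤ ρhat n)
    (Eex : ℕ → ℝ) (hEex : ∀ n, Eex n = ExFun n (W n) (Q n) (ρhat n) - ρhat n * R)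
    (γ : ℕ → ℝ) (hγpos : ∀ n, 0 < γ n)
    (hγtop : Filter.Tendsto γ Filter.atTop Filter.atTop)
    (δ : ℕ → ℝ) (hδ : ∀ n, δ n = ρhat n / (n : ℝ) * Real.logb 2 (γ n))
    (Φ : ∀ n : ℕ, (Fin (M' n) → (Fin n → 𝒳)) → ℕ)
    (hΦ : ∀ n c, Φ n c = (Finset.univ.filter (fun m : Fin (M' n) =>
      Pem (W n) c m = 0 ∨
        Eex n - δ n < -(1 / (n : ℝ)) * Real.logb 2 (Pem (W n) c m))).card) :
    Filter.Tendsto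
      (fun n => pmfProb (μ n) (fun c => (M n : ℝ) * (1 + ε₁) ≤ (Φ n c : ℝ)))
      Filter.atTop (nhds 1) := by
  set K := 2 * (2 + ε) ^ 2 / (ε - ε₁)
  have hlower : ∀ᶠ n in Filter.atTop,
      1 - K / γ n ≤ pmfProb (μ n) (fun c => (M n : ℝ) * (1 + ε₁) ≤ (Φ n c : ℝ)) := by
    filter_upwards [Filter.eventually_ge_atTop 1] with n hn
    have hfew := (hμ n hn).pmfProb_card_good_lt_le (hW n hn).1 (by omega) (hρhat1 n) hR.le
      (hγpos n) hε₁.le hεε (hM n) (hM' n) (a := Eex n - δ n) (by rw [hEex, hδ])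
    rw [pmfProb_not (hμ n hn).1] at hfew
    simp only [hΦ]
    linarith
  have hupper : ∀ᶠ n in Filter.atTop,
      pmfProb (μ n) (fun c => (M n : ℝ) * (1 + ε₁) ≤ (Φ n c : ℝ)) ≤ 1 := by
    filter_upwards [Filter.eventually_ge_atTop 1] with n hn
    exact pmfProb_le_one (hμ n hn).1 _
  have hK : Filter.Tendsto (fun n => 1 - K / γ n) Filter.atTop (nhds 1) := by
    simpa using ((tendsto_const_nhds (x := K)).div_atTop hγtop).const_sub 1
  exact tendsto_of_tendsto_of_tendsto_of_le_of_le' hK tendsto_const_nhds hlower hupper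

/-- Theorem 1: with probability tending to one, a random code with
`M'_n = ⌈M_n(1+ε)⌉` codewords contains at least `M_n(1+ε₁)` codewords whose
error exponent exceeds `E_ex^n(R) - δ_n`. -/
theorem theorem1
    {𝒳 𝒴 : Type*} [Fintype 𝒳] [Fintype 𝒴] [Nonempty 𝒳] [Nonempty 𝒴]
    (R : ℝ) (hR : 0 < R) (ε ε₁ : ℝ) (hε₁ : 0 < ε₁) (hεε : ε₁ < ε)
    (W : ∀ n : ℕ, (Fin n → 𝒳) → (Fin n → 𝒴) → ℝ)
    (hW : ∀ n, 1 ≤ n → IsChannel (W n))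
    (Q : ∀ n : ℕ, (Fin n → 𝒳) → ℝ)
    (M M' : ℕ → ℕ)
    (hM : ∀ n, M n = ⌈(2:ℝ) ^ ((n : ℝ) * R)⌉₊)
    (hM' : ∀ n, M' n = ⌈(M n : ℝ) * (1 + ε)⌉₊)
    (μ : ∀ n : ℕ, (Fin (M' n) → (Fin n → 𝒳)) → ℝ)
    (hμ : ∀ n, 1 ≤ n → PairwiseIndepEnsemble (μ n) (Q n))
    (ρhat : ℕ → ℝ) (hρhat1 : ∀ n, 1 ≤ ρhat n)
    (hρhatmax : ∀ n, 1 ≤ n → ∀ ρ : ℝ, 1 ≤ ρ →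
      ExFun n (W n) (Q n) ρ - ρ * R ≤ ExFun n (W n) (Q n) (ρhat n) - ρhat n * R)
    (Eex : ℕ → ℝ) (hEex : ∀ n, Eex n = ExFun n (W n) (Q n) (ρhat n) - ρhat n * R)
    (γ : ℕ → ℝ) (hγpos : ∀ n, 0 < γ n)
    (hγtop : Filter.Tendsto γ Filter.atTop Filter.atTop)
    (hγsub : Filter.Tendsto (fun n => Real.logb 2 (γ n) / (n : ℝ)) Filter.atTop (nhds 0))
    (δ : ℕ → ℝ) (hδ : ∀ n, δ n = ρhat n / (n : ℝ) * Real.logb 2 (γ n))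
    (hδ0 : Filter.Tendsto δ Filter.atTop (nhds 0))
    (Φ : ∀ n : ℕ, (Fin (M' n) → (Fin n → 𝒳)) → ℕ)
    (hΦ : ∀ n c, Φ n c = (Finset.univ.filter (fun m : Fin (M' n) =>
      Pem (W n) c m = 0 ∨
        Eex n - δ n < -(1 / (n : ℝ)) * Real.logb 2 (Pem (W n) c m))).card) :
    Filter.Tendsto
      (fun n => pmfProb (μ n) (fun c => (M n : ℝ) * (1 + ε₁) ≤ (Φ n c : ℝ)))
      Filter.atTop (nhds 1) :=
  theorem1_general R hR ε ε₁ hε₁ hεε W hW Q M M' hM hM' μ hμ ρhat hρhat1 Eex hEex γ hγpos hγtop δ hδ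
    Φ hΦ
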